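/- Let G be an AG-group, ν a fuzzy AG-subgroup of G, and H an AG-subgroup of G. Then for all x, y ∈ G: sup{ν(z) : z ∈ H(x·y)} ≥ min( sup{ν(u) : u ∈ Hx}, sup{ν(v) : v ∈ Hy} ), and sup{ν(z) : z ∈ H(x⁻¹)} ≥ sup{ν(w) : w ∈ Hx}. (Hence ξ(Hx) := sup{ν(z) : z ∈ Hx} defines a fuzzy AG-subgroup of the quotient AG-group G/H.) -/
import Mathlib


/-- An AG-group: a groupoid satisfying the left invertive law, with a left
identity `e` and two-sided inverses. -/
class AGGroup (G : Type*) where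
  mul : G → G → G
  e : G
  inv : G → G
  left_invertive : ∀ a b c : G, mul (mul a b) c = mul (mul c b) a
  left_id : ∀ a : G, mul e a = a
  inv_mul : ∀ a : G, mul (inv a) a = e
  mul_inv : ∀ a : G, mul a (inv a) = e

namespace AGGroup

variable {G : Type*} [AGGroup G]

/-- A fuzzy AG-subgroup: a fuzzy subset (a map into `[0,1]`) with
`μ(xy) ≥ min (μ x) (μ y)` and `μ x⁻¹ ≥ μ x`. -/
def IsFuzzyAGSubgroup (μ : G → ℝ) : Prop :=
  (∀ x : G, μ x ∈ Set.Icc (0 : ℝ) 1) ∧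
  (∀ x y : G, μ (mul x y) ≥ min (μ x) (μ y)) ∧
  (∀ x : G, μ (inv x) ≥ μ x)

/-- A normal fuzzy AG-subgroup: a fuzzy AG-subgroup with `μ((xy)x⁻¹) = μ y`. -/
def IsNormalFuzzyAGSubgroup (μ : G → ℝ) : Prop :=
  IsFuzzyAGSubgroup μ ∧ ∀ x y : G, μ (mul (mul x y) (inv x)) = μ y

/-- The fuzzy coset `μ_x`, given by `μ_x g = μ (g x⁻¹)`. -/
def fuzzyCoset (μ : G → ℝ) (x : G) : G → ℝ :=
  fun g => μ (mul g (inv x))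

/-- The level set `μ* = {a : μ a = μ e}` of a fuzzy AG-subgroup. -/
def levelSet (μ : G → ℝ) : Set G := {a : G | μ a = μ e}

/-- The right coset `S x = {s x : s ∈ S}` of a subset `S`. -/
def rightCoset (S : Set G) (x : G) : Set G := (fun s => mul s x) '' S

/-- An AG-subgroup: a nonempty subset closed under the operation and inverses. -/
def IsAGSubgroup (H : Set G) : Prop :=
  H.Nonempty ∧ (∀ a ∈ H, ∀ b ∈ H, mul a b ∈ H) ∧ (∀ a ∈ H, inv a ∈ H)

theorem medial (a b c d : G) :
    mul (mul a b) (mul c d) = mul (mul a c) (mul b d) := by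
  rw [left_invertive a b (mul c d), left_invertive c d b,
    left_invertive (mul b d) c a]

theorem eq_inv_of_mul_eq_e {a b : G} (hab : mul a b = e) : b = inv a := by
  have hba : mul b a = e := by
    have h1 : mul (mul e b) a = mul (mul a b) e := left_invertive e b a
    rw [left_id, hab, left_id] at h1
    exact h1
  calc b = mul e b := (left_id b).symm
    _ = mul (mul (inv a) a) b := by rw [inv_mul]
    _ = mul (mul b a) (inv a) := left_invertive _ _ _
    _ = inv a := by rw [hba, left_id]

theorem inv_mul_rev (a b : G) : inv (mul a b) = mul (inv a) (inv b) :=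
  (eq_inv_of_mul_eq_e (by rw [medial, mul_inv, mul_inv, left_id])).symm

end AGGroup

open AGGroup

/-- `ξ(Hx) = sup {ν z : z ∈ Hx}` satisfies the fuzzy
AG-subgroup inequalities on the quotient `G/H`. -/
theorem quotient_fuzzy_AGSubgroup {G : Type*} [AGGroup G] (ν : G → ℝ)
    (hν : IsFuzzyAGSubgroup ν) (H : Set G) (hH : IsAGSubgroup H) (x y : G) :
    sSup (ν '' rightCoset H (mul x y)) ≥
      min (sSup (ν '' rightCoset H x)) (sSup (ν '' rightCoset H y)) ∧
    sSup (ν '' rightCoset H (inv x)) ≥ sSup (ν '' rightCoset H x) := by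
  obtain ⟨hbound, hmul, hinv⟩ := hν
  obtain ⟨hne, hcl, hic⟩ := hH
  have hbdd : ∀ z : G, BddAbove (ν '' rightCoset H z) := fun z =>
    ⟨1, by rintro _ ⟨_, ⟨h, hh, rfl⟩, rfl⟩; exact (hbound _).2⟩
  obtain ⟨h0, hh0⟩ := hne
  have hnon : ∀ z : G, (ν '' rightCoset H z).Nonempty := fun z =>
    ⟨ν (mul h0 z), ⟨mul h0 z, ⟨h0, hh0, rfl⟩, rfl⟩⟩
  constructor
  · rw [ge_iff_le]
    refine le_of_forall_pos_le_add fun ε hε => ?_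
    obtain ⟨a, ⟨_, ⟨h, hh, rfl⟩, rfl⟩, ha⟩ :=
      (lt_csSup_iff (hbdd x) (hnon x)).mp
        (by linarith : sSup (ν '' rightCoset H x) - ε < sSup (ν '' rightCoset H x))
    obtain ⟨b, ⟨_, ⟨k, hk, rfl⟩, rfl⟩, hb⟩ :=
      (lt_csSup_iff (hbdd y) (hnon y)).mp
        (by linarith : sSup (ν '' rightCoset H y) - ε < sSup (ν '' rightCoset H y))
    have hmem : ν (mul (mul h x) (mul k y)) ∈ ν '' rightCoset H (mul x y) := by
      rw [medial]
      exact ⟨mul (mul h k) (mul x y), ⟨mul h k, hcl h hh k hk, rfl⟩, rfl⟩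
    have hle := le_csSup (hbdd (mul x y)) hmem
    have := hmul (mul h x) (mul k y)
    have hmin : min (ν (mul h x)) (ν (mul k y)) ≥
        min (sSup (ν '' rightCoset H x)) (sSup (ν '' rightCoset H y)) - ε :=
      le_min
        (by have := min_le_left (sSup (ν '' rightCoset H x))
              (sSup (ν '' rightCoset H y)); linarith)
        (by have := min_le_right (sSup (ν '' rightCoset H x))
              (sSup (ν '' rightCoset H y)); linarith)
    linarith
  · refine csSup_le (hnon x) ?_
    rintro _ ⟨_, ⟨h, hh, rfl⟩, rfl⟩
    have hmem : ν (inv (mul h x)) ∈ ν '' rightCoset H (inv x) := by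
      rw [inv_mul_rev]
      exact ⟨mul (inv h) (inv x), ⟨inv h, hic h hh, rfl⟩, rfl⟩
    exact le_trans (hinv (mul h x)) (le_csSup (hbdd (inv x)) hmem)
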